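/- arXiv:2604.01817 — 7 statements merged into one kernel-verified Lean document; each statement's English description precedes it below -/
import Mathlib

section
/- Let G be a finite group, p a prime, and suppose G is not perfect, G is generated by its elements of order p, and a Sylow p-subgroup of G is cyclic of order p generated by an element a. Then G is the semidirect product of its derived subgroup G' with ⟨a⟩, and G' is a p'-group (its order is not divisible by p). -/
theorem stmt_0 {G : Type} [Group G] [Finite G] {p : ℕ} (hp : p.Prime) (a : G)
    (ha : orderOf a = p)
    (hSyl : ∃ P : Sylow p G, (P : Subgroup G) = Subgroup.zpowers a)
    (hgen : Subgroup.closure {g : G | orderOf g = p} = ⊤)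
    (hnperf : commutator G ≠ ⊤) :
    commutator G ⊔ Subgroup.zpowers a = ⊤ ∧
    commutator G ⊓ Subgroup.zpowers a = ⊥ ∧
    ¬ p ∣ Nat.card (commutator G) := by
  haveI : Fact p.Prime := ⟨hp⟩
  obtain ⟨P, hP⟩ := hSyl
  -- multiplicity of p in |G| is 1
  have hcardP : Nat.card (P : Subgroup G) = p := by
    rw [hP, Nat.card_zpowers, ha]
  have hmult : (Nat.card G).factorization p = 1 := by
    have := P.card_eq_multiplicity
    rw [hcardP] at this
    exact (Nat.pow_right_injective hp.two_le (by simpa using this)).symm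
  have hcardG : Nat.card G ≠ 0 := Nat.card_pos.ne'
  -- the quotient has exponent p
  have hexp : ∀ x : Abelianization G, x ^ p = 1 := by
    intro x
    let T : Subgroup (Abelianization G) :=
      { carrier := {x | x ^ p = 1}
        one_mem' := one_pow p
        mul_mem' := by
          intro u v hu hv
          simp only [Set.mem_setOf_eq] at *
          rw [mul_pow, hu, hv, one_mul]
        inv_mem' := by
          intro u hu
          simp only [Set.mem_setOf_eq] at *
          rw [inv_pow, hu, inv_one] }
    have hT : T = ⊤ := by
      have hsurj : Function.Surjective (Abelianization.of (G := G)) := fun x =>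
        Quotient.inductionOn x fun g => ⟨g, rfl⟩
      have : Subgroup.map Abelianization.of (⊤ : Subgroup G) = ⊤ :=
        Subgroup.map_top_of_surjective _ hsurj
      rw [← hgen, MonoidHom.map_closure] at this
      rw [eq_top_iff, ← this, Subgroup.closure_le]
      rintro y ⟨g, hg, rfl⟩
      show (Abelianization.of g) ^ p = 1
      rw [← map_pow, ← hg, pow_orderOf_eq_one, map_one]
    have : x ∈ T := hT ▸ Subgroup.mem_top x
    exact this
  -- quotient is a p-group
  have hpQ : IsPGroup p (Abelianization G) := fun x => ⟨1, by rw [pow_one]; exact hexp x⟩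
  obtain ⟨n, hn⟩ := hpQ.exists_card_eq
  -- card of quotient = index of commutator
  have hidx : (commutator G).index = p ^ n := hn
  have hidx_dvd : (commutator G).index ∣ Nat.card G := Subgroup.index_dvd_card _
  have hn1 : n = 1 := by
    have hnz : (commutator G).index ≠ 1 := by
      simpa [Subgroup.index_eq_one] using hnperf
    have hle : n ≤ 1 := by
      rw [hidx] at hidx_dvd
      have := (Nat.Prime.pow_dvd_iff_le_factorization hp hcardG).mp hidx_dvd
      omega
    interval_cases n
    · simp [hidx] at hnz
    · rfl
  rw [hn1, pow_one] at hidx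
  -- p does not divide |G'|
  have hnd : ¬ p ∣ Nat.card (commutator G) := by
    intro hdvd
    have h2 : p ^ 2 ∣ Nat.card G := by
      rw [← (commutator G).card_mul_index, hidx, sq]
      exact Nat.mul_dvd_mul hdvd dvd_rfl
    have := (Nat.Prime.pow_dvd_iff_le_factorization hp hcardG).mp h2
    omega
  -- intersection is trivial
  have hinf : commutator G ⊓ Subgroup.zpowers a = ⊥ := by
    rw [← Subgroup.card_eq_one]
    have h1 : Nat.card (commutator G ⊓ Subgroup.zpowers a : Subgroup G) ∣ p := by
      have := Subgroup.card_dvd_of_le (inf_le_right (a := commutator G)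
        (b := Subgroup.zpowers a))
      rwa [Nat.card_zpowers, ha] at this
    have h2 : Nat.card (commutator G ⊓ Subgroup.zpowers a : Subgroup G) ∣
        Nat.card (commutator G) :=
      Subgroup.card_dvd_of_le inf_le_left
    rcases (Nat.dvd_prime hp).mp h1 with h | h
    · exact h
    · exact absurd (h ▸ h2) hnd
  -- sup is top
  have hsup : commutator G ⊔ Subgroup.zpowers a = ⊤ := by
    rw [← Subgroup.index_eq_one]
    have hle : commutator G ≤ commutator G ⊔ Subgroup.zpowers a := le_sup_left
    have hdvd : (commutator G ⊔ Subgroup.zpowers a).index ∣ p :=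
      hidx ▸ Subgroup.index_dvd_of_le hle
    rcases (Nat.dvd_prime hp).mp hdvd with h | h
    · exact h
    · exfalso
      have hrel := Subgroup.relIndex_mul_index hle
      rw [h, hidx] at hrel
      have : (commutator G).relIndex (commutator G ⊔ Subgroup.zpowers a) = 1 :=
        Nat.eq_of_mul_eq_mul_right hp.pos (by rw [one_mul]; exact hrel)
      have hle2 : Subgroup.zpowers a ≤ commutator G :=
        le_sup_right.trans (Subgroup.relIndex_eq_one.mp this)
      have : orderOf a ∣ Nat.card (commutator G) :=
        (commutator G).orderOf_dvd_natCard (hle2 (Subgroup.mem_zpowers a))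
      rw [ha] at this
      exact hnd this
  exact ⟨hsup, hinf, hnd⟩
end

section
/- Let G be a finite group, p a prime, and suppose G is not perfect, G is generated by its elements of order p, and a Sylow p-subgroup of G is cyclic of order p generated by an element a. If the derived subgroup G' is abelian, then conjugation by a acts on G' without nontrivial fixed points, i.e., for every x ∈ G' with x^a = x one has x = 1. -/
/-!
Write `N = G'`. Since `G` is generated by elements of order `p`, `G ⧸ N` has exponent `p`, so
the image of the Sylow subgroup `⟨a⟩` is all of `G ⧸ N` and `G = N ⟨a⟩`. As `N` is abelian,
`x ↦ ⁅a, x⁆` is an endomorphism of `N`; its image `K` is normalized by `N` and by `a`, hence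
normal, and `G ⧸ K` is abelian because `N` and `a` commute modulo `K`. Thus `N ≤ K`: the
endomorphism is surjective, hence injective on the finite group `N`, and a fixed point `x` of
`a` has `⁅a, x⁆ = 1 = ⁅a, 1⁆`.
-/

open Subgroup
open scoped commutatorElement

variable {G : Type*} [Group G]

theorem Abelianization.exponent_dvd_of_closure_eq_top {n : ℕ}
    (h : closure {g : G | g ^ n = 1} = ⊤) : Monoid.exponent (Abelianization G) ∣ n := by
  refine Monoid.exponent_dvd_of_forall_pow_eq_one fun q ↦ ?_
  obtain ⟨g, rfl⟩ := QuotientGroup.mk'_surjective (commutator G) q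
  have hker : closure {g : G | g ^ n = 1} ≤ ((powMonoidHom n).comp Abelianization.of).ker :=
    (closure_le _).mpr fun x (hx : x ^ n = 1) ↦ by simp [← map_pow, hx]
  exact hker (h ▸ mem_top g)

theorem Sylow.sup_eq_top_of_isPGroup_quotient {p : ℕ} [Fact p.Prime] [Finite G] (P : Sylow p G)
    {N : Subgroup G} [N.Normal] (hN : IsPGroup p (G ⧸ N)) : N ⊔ P = ⊤ := by
  obtain ⟨k, hk⟩ := hN.index (P.map (QuotientGroup.mk' N))
  have hk0 : k = 0 := by
    by_contra hk0
    exact P.not_dvd_index <|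
      (dvd_pow_self p hk0).trans (hk ▸ P.index_map_dvd (QuotientGroup.mk'_surjective N))
  rw [hk0, pow_zero, index_eq_one] at hk
  rw [← QuotientGroup.comap_map_mk', hk, comap_top]

theorem commutator_le_of_closure_eq_top {s : Set G} (hs : closure s = ⊤) {K : Subgroup G}
    [K.Normal] (h : ∀ x ∈ s, ∀ y ∈ s, ⁅x, y⁆ ∈ K) : commutator G ≤ K := by
  rw [← Normal.quotient_commutative_iff_commutator_le, isMulCommutative_iff]
  have hcomm : ∀ x ∈ QuotientGroup.mk' K '' s, ∀ y ∈ QuotientGroup.mk' K '' s,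
      x * y = y * x := by
    rintro - ⟨x, hx, rfl⟩ - ⟨y, hy, rfl⟩
    rw [← commute_iff_eq, ← commutatorElement_eq_one_iff_commute, ← map_commutatorElement,
      QuotientGroup.mk'_apply, QuotientGroup.eq_one_iff]
    exact h x hx y hy
  have := isMulCommutative_closure hcomm
  have htop : closure (QuotientGroup.mk' K '' s) = ⊤ := by
    rw [← MonoidHom.map_closure, hs, ← MonoidHom.range_eq_map,
      MonoidHom.range_eq_top.mpr (QuotientGroup.mk'_surjective K)]
  intro x y
  exact setLike_mul_comm (htop ▸ mem_top x) (htop ▸ mem_top y)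

namespace Subgroup

variable (N : Subgroup G) [N.Normal] [IsMulCommutative N] (a : G)

def commutatorLeftHom : N →* N :=
  MonoidHom.mk'
    (fun x ↦ ⟨⁅a, x⁆, by
      rw [commutatorElement_def]
      exact N.mul_mem (‹N.Normal›.conj_mem x x.2 a) (N.inv_mem x.2)⟩)
    fun x y ↦ Subtype.ext <| by
      have hcomm := setLike_mul_comm (N.inv_mem x.2)
        (N.mul_mem (‹N.Normal›.conj_mem y y.2 a) (N.inv_mem y.2))
      simp only [commutatorElement_def, coe_mul, mul_inv_rev, mul_assoc] at hcomm ⊢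
      rw [hcomm, inv_mul_cancel_left]

@[simp]
theorem coe_commutatorLeftHom_apply (x : N) :
    (N.commutatorLeftHom a x : G) = ⁅a, (x : G)⁆ :=
  rfl

variable {N a}

theorem commutatorElement_mem_map_range_commutatorLeftHom (x : G) (hx : x ∈ N) :
    ⁅a, x⁆ ∈ (N.commutatorLeftHom a).range.map N.subtype :=
  ⟨_, ⟨⟨x, hx⟩, rfl⟩, rfl⟩

theorem normal_map_range_commutatorLeftHom (h : N ⊔ zpowers a = ⊤) :
    ((N.commutatorLeftHom a).range.map N.subtype).Normal := by
  set K := (N.commutatorLeftHom a).range.map N.subtype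
  have hKN : K ≤ N := map_subtype_le _
  have hconj : ∀ g, g * a * g⁻¹ = a → ∀ k ∈ K, g * k * g⁻¹ ∈ K := by
    rintro g hg - ⟨-, ⟨x, rfl⟩, rfl⟩
    refine ⟨_, ⟨⟨g * x * g⁻¹, ‹N.Normal›.conj_mem x x.2 g⟩, rfl⟩, ?_⟩
    simp [conjugate_commutatorElement, hg]
  have hN : N ≤ normalizer (K : Set G) :=
    ((le_centralizer N).trans (centralizer_le hKN)).trans (centralizer_le_normalizer _)
  have ha : a ∈ normalizer (K : Set G) := fun k ↦ by
    refine ⟨hconj a (by group) k, fun hk ↦ ?_⟩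
    simpa [mul_assoc] using hconj a⁻¹ (by group) _ hk
  rw [← normalizer_eq_top_iff, eq_top_iff, ← h]
  exact sup_le hN (zpowers_le.mpr ha)

theorem commutator_le_map_range_commutatorLeftHom (h : N ⊔ zpowers a = ⊤) :
    _root_.commutator G ≤ (N.commutatorLeftHom a).range.map N.subtype := by
  have := normal_map_range_commutatorLeftHom h
  refine commutator_le_of_closure_eq_top (s := N ∪ {a}) ?_ ?_
  · rw [closure_union, closure_eq, ← zpowers_eq_closure, h]
  · rintro x (hx | rfl) y (hy | rfl)
    · rw [commutatorElement_eq_one_iff_mul_comm.mpr (setLike_mul_comm hx hy)]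
      exact one_mem _
    · rw [← commutatorElement_inv]
      exact inv_mem (commutatorElement_mem_map_range_commutatorLeftHom x hx)
    · exact commutatorElement_mem_map_range_commutatorLeftHom y hy
    · rw [commutatorElement_self]
      exact one_mem _

end Subgroup

theorem commutatorLeftHom_commutator_injective [Finite G] [IsMulCommutative (commutator G)]
    {a : G} (h : commutator G ⊔ zpowers a = ⊤) :
    Function.Injective ((commutator G).commutatorLeftHom a) :=
  Finite.injective_iff_surjective.mpr fun x ↦ by
    obtain ⟨-, ⟨y, rfl⟩, hy⟩ := commutator_le_map_range_commutatorLeftHom h x.2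
    exact ⟨y, Subtype.ext hy⟩

theorem stmt_1_general {G : Type} [Group G] [Finite G] {p : ℕ} (hp : p.Prime) (a : G)
    (hSyl : ∃ P : Sylow p G, (P : Subgroup G) = Subgroup.zpowers a)
    (hgen : Subgroup.closure {g : G | orderOf g = p} = ⊤)
    (hab : ∀ x ∈ commutator G, ∀ y ∈ commutator G, x * y = y * x) :
    ∀ x ∈ commutator G, a⁻¹ * x * a = x → x = 1 := by
  have : Fact p.Prime := ⟨hp⟩
  have : IsMulCommutative (commutator G) := ⟨⟨fun x y ↦ Subtype.ext (hab x x.2 y y.2)⟩⟩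
  obtain ⟨P, hP⟩ := hSyl
  have hpow : closure {g : G | g ^ p = 1} = ⊤ :=
    eq_top_mono (closure_mono fun g (hg : orderOf g = p) ↦ hg ▸ pow_orderOf_eq_one g) hgen
  have hquot : IsPGroup p (Abelianization G) :=
    IsPGroup.of_exponent_dvd_pow (n := 1) <| by
      simpa using Abelianization.exponent_dvd_of_closure_eq_top hpow
  have htop : commutator G ⊔ zpowers a = ⊤ := hP ▸ P.sup_eq_top_of_isPGroup_quotient hquot
  intro x hx hfix
  have hcomm : ⁅a, x⁆ = 1 := by
    nth_rewrite 1 [commutatorElement_def, ← hfix]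
    group
  simpa using commutatorLeftHom_commutator_injective htop
    (a₁ := ⟨x, hx⟩) (a₂ := 1) (Subtype.ext (by simpa using hcomm))

theorem stmt_1 {G : Type} [Group G] [Finite G] {p : ℕ} (hp : p.Prime) (a : G)
    (ha : orderOf a = p)
    (hSyl : ∃ P : Sylow p G, (P : Subgroup G) = Subgroup.zpowers a)
    (hgen : Subgroup.closure {g : G | orderOf g = p} = ⊤)
    (hnperf : commutator G ≠ ⊤)
    (hab : ∀ x ∈ commutator G, ∀ y ∈ commutator G, x * y = y * x) :
    ∀ x ∈ commutator G, a⁻¹ * x * a = x → x = 1 :=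
  stmt_1_general hp a hSyl hgen hab
end

section
/- Let G be a finite solvable group and b ∈ G an element of prime order p. If p does not divide the order of the Fitting subgroup F(G), then there exists a nontrivial element x ∈ F(G) such that bx has order p. -/
/-!
Write `F = F(G)`. In a solvable group `C_G(F) ≤ F`: intersecting the derived series of `G` with
the normal subgroup `C = C_G(F)` gives normal subgroups `E j` ending in `⊥`, and if `E (j+1) ≤ F`
then `⁅E j, E j⁆ ≤ F` is centralized by `E j ≤ C`, so `E j` is nilpotent of class at most two,
hence `E j ≤ F`. Descending along the series yields `C = E 0 ≤ F`.

Since `p ∤ |F|`, the element `b` of order `p` is not in `F`, so it fails to centralize some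
`y ∈ F`. Then `x = ⁅b⁻¹, y⁆ ∈ F` is nontrivial and `b x = y b y⁻¹` is conjugate to `b`.
-/

/-- The Fitting subgroup of `G`: the join of all nilpotent normal subgroups. -/
def fittingSubgroup (G : Type*) [Group G] : Subgroup G :=
  sSup {H : Subgroup G | H.Normal ∧ Group.IsNilpotent H}

open Subgroup
open scoped commutatorElement

variable {G : Type*} [Group G]

theorem Group.isNilpotent_of_commutatorElement_mem_center (h : ∀ x y : G, ⁅x, y⁆ ∈ center G) :
    Group.IsNilpotent G :=
  ⟨2, eq_top_iff.mpr fun x _ ↦ Subgroup.mem_upperCentralSeries_succ_iff.mpr fun y ↦ by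
    rw [Subgroup.upperCentralSeries_one]
    exact h x y⟩

theorem Subgroup.isNilpotent_of_commutator_le_centralizer {H : Subgroup G}
    (h : ⁅H, H⁆ ≤ centralizer H) : Group.IsNilpotent H :=
  Group.isNilpotent_of_commutatorElement_mem_center fun x y ↦ mem_center_iff.mpr fun z ↦
    Subtype.ext (h (commutator_mem_commutator x.2 y.2) z z.2)

theorem fittingSubgroup_normal : (fittingSubgroup G).Normal :=
  sSup_normal _ fun _ hH ↦ hH.1

theorem le_fittingSubgroup {H : Subgroup G} [hN : H.Normal] (hH : Group.IsNilpotent H) :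
    H ≤ fittingSubgroup G :=
  le_sSup ⟨hN, hH⟩

theorem le_fittingSubgroup_of_commutator_le {N : Subgroup G} [N.Normal]
    (hN : N ≤ centralizer (fittingSubgroup G)) (hNN : ⁅N, N⁆ ≤ fittingSubgroup G) :
    N ≤ fittingSubgroup G :=
  le_fittingSubgroup <| isNilpotent_of_commutator_le_centralizer <|
    hNN.trans (le_centralizer_iff.mpr hN)

theorem centralizer_fittingSubgroup_le [Group.IsSolvable G] :
    centralizer (fittingSubgroup G : Set G) ≤ fittingSubgroup G := by
  set F := fittingSubgroup G
  set C := centralizer (F : Set G)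
  have : F.Normal := fittingSubgroup_normal
  let E : ℕ → Subgroup G := fun j ↦ C ⊓ derivedSeries G j
  have hstep (j : ℕ) (hj : E (j + 1) ≤ F) : E j ≤ F := by
    have : (derivedSeries G j).Normal := derivedSeries_normal G j
    refine le_fittingSubgroup_of_commutator_le inf_le_left (le_trans ?_ hj)
    exact le_inf ((commutator_mono inf_le_left inf_le_left).trans (commutator_le_left C C))
      (commutator_mono inf_le_right inf_le_right)
  obtain ⟨n, hn⟩ := Group.IsSolvable.solvable (G := G)
  have hE (k j : ℕ) (hjk : n ≤ j + k) : E j ≤ F := by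
    induction k generalizing j with
    | zero =>
      have : derivedSeries G j = ⊥ := eq_bot_iff.mpr (hn ▸ derivedSeries_antitone G hjk)
      simp [E, this]
    | succ k ih => exact hstep j (ih (j + 1) (by omega))
  simpa [E] using hE n 0 (by omega)

theorem Subgroup.exists_ne_one_mem_orderOf_mul_eq {N : Subgroup G} [N.Normal] {b : G}
    (hb : b ∉ centralizer (N : Set G)) : ∃ x ∈ N, x ≠ 1 ∧ orderOf (b * x) = orderOf b := by
  obtain ⟨y, hyN, hyb⟩ : ∃ y ∈ N, ¬Commute y b := by
    simpa [mem_centralizer_iff, Commute, SemiconjBy] using hb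
  refine ⟨⁅b⁻¹, y⁆, commutator_le_right ⊤ N (commutator_mem_commutator (mem_top _) hyN), ?_, ?_⟩
  · rw [Ne, commutatorElement_eq_one_iff_commute, Commute.inv_left_iff]
    exact fun h ↦ hyb h.symm
  · refine (SemiconjBy.orderOf_eq y ?_).symm
    simp only [SemiconjBy, commutatorElement_def]
    group

theorem stmt_2_general {G : Type} [Group G] (hsolv : IsSolvable G)
    {p : ℕ} (b : G) (hb : orderOf b = p)
    (hF : ¬ p ∣ Nat.card (fittingSubgroup G)) :
    ∃ x ∈ fittingSubgroup G, x ≠ 1 ∧ orderOf (b * x) = p := by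
  have : Group.IsSolvable G := hsolv
  have := fittingSubgroup_normal (G := G)
  have hbF : b ∉ fittingSubgroup G := fun h ↦ hF (hb ▸ orderOf_dvd_natCard _ h)
  obtain ⟨x, hxF, hx1, hx⟩ :=
    exists_ne_one_mem_orderOf_mul_eq fun h ↦ hbF (centralizer_fittingSubgroup_le h)
  exact ⟨x, hxF, hx1, hx.trans hb⟩

theorem stmt_2 {G : Type} [Group G] [Finite G] (hsolv : IsSolvable G)
    {p : ℕ} (hp : p.Prime) (b : G) (hb : orderOf b = p)
    (hF : ¬ p ∣ Nat.card (fittingSubgroup G)) :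
    ∃ x ∈ fittingSubgroup G, x ≠ 1 ∧ orderOf (b * x) = p :=
  stmt_2_general hsolv b hb hF
end

section
/- Let G = V ⋊ S be a finite group where V is a nontrivial elementary abelian p-group, and let q be a prime different from p. Suppose G has no element of order pq. Regard V as an F_p[S]-module and suppose H is a subgroup of S such that V is isomorphic as F_p[S]-module to the module induced from an F_p[H]-submodule W of V. Then every element of order q in S lies in H. -/
/-- The multiplicative group structure on `AddAut A` (composition), as in the older Mathlib. -/
instance addAutGroup (A : Type*) [Add A] : Group (AddAut A) where
  mul g h := AddEquiv.trans h g
  one := AddEquiv.refl _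
  inv := AddEquiv.symm
  mul_assoc _ _ _ := rfl
  one_mul _ := rfl
  mul_one _ := rfl
  inv_mul_cancel := AddEquiv.self_trans_symm

/-- The canonical homomorphism from additive automorphisms of `V` to multiplicative
automorphisms of `Multiplicative V`. -/
def addAutToMulAut (V : Type*) [AddCommGroup V] : AddAut V →* MulAut (Multiplicative V) where
  toFun e := AddEquiv.toMultiplicative e
  map_one' := rfl
  map_mul' _ _ := rfl

/-!
Suppose `s` has order `q` but `s ∉ H`. Then `sⁱH` for `0 ≤ i < q` are distinct cosets, so for
`0 ≠ w ∈ W` the vectors `sⁱw` lie in distinct summands `tW` of `V`. (The right transversal `T` is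
a left transversal too: elements of one left coset give the same summand, independent nonzero
summands are distinct, and there are as many left as right cosets.) The sum `∑ sⁱw` is fixed by `s`, and a nonzero vector `v`
fixed by `s` would make `(v, s)` an element of order `pq`. So the sum vanishes, and independence
forces `w = 0`.
-/

open Function

namespace SemidirectProduct

variable {N G : Type*} [Group N] [Group G] {φ : G →* MulAut N}

theorem commute_inl_inr_of_apply_eq {n : N} {g : G} (h : φ g n = n) :
    Commute (inl n : N ⋊[φ] G) (inr g) := by
  ext <;> simp [h]

theorem orderOf_inl_mul_inr_of_apply_eq {n : N} {g : G} (h : φ g n = n)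
    (hcop : (orderOf n).Coprime (orderOf g)) :
    orderOf (inl n * inr g : N ⋊[φ] G) = orderOf n * orderOf g := by
  rw [(commute_inl_inr_of_apply_eq h).orderOf_mul_eq_mul_orderOf_of_coprime,
    orderOf_injective _ inl_injective, orderOf_injective _ inr_injective]
  rwa [orderOf_injective _ inl_injective, orderOf_injective _ inr_injective]

end SemidirectProduct

theorem Subgroup.mem_of_pow_mem_of_coprime {G : Type*} [Group G] {H : Subgroup G} {g : G} {n : ℕ}
    (hn : n.Coprime (orderOf g)) (hg : g ^ n ∈ H) : g ∈ H := by
  obtain ⟨m, hm⟩ := exists_pow_eq_self_of_coprime hn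
  exact hm ▸ H.pow_mem hg m

theorem Subgroup.pow_notMem_of_orderOf_prime {G : Type*} [Group G] {H : Subgroup G} {g : G}
    (hg : (orderOf g).Prime) (hgH : g ∉ H) {n : ℕ} (hn₀ : 0 < n) (hn : n < orderOf g) :
    g ^ n ∉ H := fun hgn =>
  hgH <| mem_of_pow_mem_of_coprime
    (Nat.coprime_comm.mp (hg.coprime_iff_not_dvd.mpr (Nat.not_dvd_of_pos_of_lt hn₀ hn))) hgn

theorem iSupIndep.apply_eq_zero_of_sum_eq_zero {ι κ V : Type*} [AddCommGroup V]
    {A : ι → AddSubgroup V} (hA : iSupIndep A) {s : Finset κ} {f : κ → V} {τ : κ → ι} {k₀ : κ}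
    (hk₀ : k₀ ∈ s) (hf : ∀ k ∈ s, f k ∈ A (τ k)) (hτ : ∀ k ∈ s, k ≠ k₀ → τ k ≠ τ k₀)
    (hsum : ∑ k ∈ s, f k = 0) : f k₀ = 0 := by
  classical
  refine AddSubgroup.disjoint_def.mp (hA (τ k₀)) (hf k₀ hk₀) ?_
  rw [← s.add_sum_erase f hk₀, add_eq_zero_iff_eq_neg] at hsum
  rw [hsum]
  refine neg_mem (sum_mem fun k hk => ?_)
  obtain ⟨hkk₀, hk⟩ := Finset.mem_erase.mp hk
  exact le_iSup₂ (f := fun j (_ : j ≠ τ k₀) => A j) (τ k) (hτ k hk hkk₀) (hf k hk)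

section Translates

variable {V S : Type*} [AddCommGroup V] [Group S] (φ : S →* AddAut V)

theorem apply_sum_range_pow_eq_self {s : S} {n : ℕ} (hs : s ^ n = 1) (w : V) :
    φ s (∑ i ∈ Finset.range n, φ (s ^ i) w) = ∑ i ∈ Finset.range n, φ (s ^ i) w := by
  have hshift : ∀ i, φ s (φ (s ^ i) w) = φ (s ^ (i + 1)) w := fun i => by
    rw [pow_succ', map_mul]; rfl
  rw [map_sum, Finset.sum_congr rfl fun i _ => hshift i]
  cases n with
  | zero => rfl
  | succ n => rw [Finset.sum_range_succ, hs, Finset.sum_range_succ', pow_zero]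

variable {H : Subgroup S} {W : AddSubgroup V} (hWH : ∀ h ∈ H, ∀ w ∈ W, φ h w ∈ W)
include hWH

theorem map_eq_self_of_mem {h : S} (hh : h ∈ H) : W.map (φ h).toAddMonoidHom = W := by
  refine le_antisymm ?_ fun w hw => ⟨φ h⁻¹ w, hWH _ (inv_mem hh) w hw, ?_⟩
  · rintro _ ⟨w, hw, rfl⟩
    exact hWH h hh w hw
  · show (φ h * φ h⁻¹) w = w
    rw [← map_mul, mul_inv_cancel, map_one]; rfl

theorem map_eq_map_of_coe_eq {a b : S} (hab : (a : S ⧸ H) = b) :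
    W.map (φ b).toAddMonoidHom = W.map (φ a).toAddMonoidHom := by
  have hb : b = a * (a⁻¹ * b) := (mul_inv_cancel_left a b).symm
  rw [hb, map_mul]
  change W.map ((φ a).toAddMonoidHom.comp (φ (a⁻¹ * b)).toAddMonoidHom) = _
  rw [← AddSubgroup.map_map, map_eq_self_of_mem φ hWH (QuotientGroup.eq.mp hab)]

theorem apply_mem_map_of_coe_eq {a b : S} (hab : (a : S ⧸ H) = b) {w : V} (hw : w ∈ W) :
    φ b w ∈ W.map (φ a).toAddMonoidHom :=
  map_eq_map_of_coe_eq φ hWH hab ▸ ⟨w, hw, rfl⟩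

theorem injective_coe_of_iSupIndep (hW : W ≠ ⊥) {ι : Type*} {t : ι → S}
    (hindep : iSupIndep fun i => W.map (φ (t i)).toAddMonoidHom) :
    Injective fun i => (t i : S ⧸ H) := fun _ _ hij =>
  hindep.injective (fun _ => (AddSubgroup.map_eq_bot_iff_of_injective _ (φ _).injective).not.mpr hW)
    (map_eq_map_of_coe_eq φ hWH hij).symm

theorem bijective_coe_of_isComplement [Finite S] (hW : W ≠ ⊥) {T : Set S}
    (hT : Subgroup.IsComplement (H : Set S) T)
    (hindep : iSupIndep fun t : T => W.map (φ t).toAddMonoidHom) :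
    Bijective fun t : T => (t : S ⧸ H) :=
  (Nat.bijective_iff_injective_and_card _).mpr
    ⟨injective_coe_of_iSupIndep φ hWH hW hindep, hT.card_right⟩

end Translates

theorem eq_zero_of_apply_eq_self {p q : ℕ} (hp : p.Prime) (hq : q.Prime) (hpq : p ≠ q)
    {V : Type*} [AddCommGroup V] (hVp : ∀ v : V, p • v = 0)
    {S : Type*} [Group S] (φ : S →* AddAut V)
    (hG : ∀ g : Multiplicative V ⋊[(addAutToMulAut V).comp φ] S, orderOf g ≠ p * q)
    {s : S} (hs : orderOf s = q) {v : V} (hv : φ s v = v) : v = 0 := by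
  by_contra hv0
  have : Fact p.Prime := ⟨hp⟩
  have hvp : orderOf (Multiplicative.ofAdd v) = p := by
    rw [orderOf_ofAdd_eq_addOrderOf, addOrderOf_eq_prime (hVp v) hv0]
  have hfix : (addAutToMulAut V).comp φ s (.ofAdd v) = .ofAdd v := congrArg Multiplicative.ofAdd hv
  have hcop : (orderOf (Multiplicative.ofAdd v)).Coprime (orderOf s) := by
    rw [hvp, hs]
    exact (Nat.coprime_primes hp hq).mpr hpq
  exact hG (.inl (.ofAdd v) * .inr s) (by
    rw [SemidirectProduct.orderOf_inl_mul_inr_of_apply_eq hfix hcop, hvp, hs])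

theorem stmt_4_general {p q : ℕ} (hp : p.Prime) (hq : q.Prime) (hpq : p ≠ q)
    (V : Type) [AddCommGroup V] [Nontrivial V] (hVp : ∀ v : V, p • v = 0)
    (S : Type) [Group S] [Finite S] (φ : S →* AddAut V)
    (hG : ∀ g : Multiplicative V ⋊[(addAutToMulAut V).comp φ] S, orderOf g ≠ p * q)
    (H : Subgroup S) (W : AddSubgroup V)
    (hWH : ∀ h ∈ H, ∀ w ∈ W, φ h w ∈ W)
    (T : Finset S) (hT : ∀ s : S, ∃! t : S, t ∈ T ∧ s * t⁻¹ ∈ H)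
    (hindep : iSupIndep (fun t : T => W.map ((φ (t : S)).toAddMonoidHom)))
    (hspan : (⨆ t : T, W.map ((φ (t : S)).toAddMonoidHom)) = ⊤) :
    ∀ s : S, orderOf s = q → s ∈ H := by
  intro s hs
  by_contra hsH
  have hW : W ≠ ⊥ := by
    rintro rfl
    simp at hspan
  have hTH : Subgroup.IsComplement (H : Set S) (T : Set S) :=
    Subgroup.isComplement_iff_existsUnique_mul_inv_mem.mpr fun g => by
      obtain ⟨t, ⟨htT, htH⟩, huniq⟩ := hT g
      exact ⟨⟨t, htT⟩, htH, fun u hu => Subtype.ext (huniq u ⟨u.2, hu⟩)⟩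
  choose rep hrep using (bijective_coe_of_isComplement φ hWH hW hTH hindep).2
  obtain ⟨w, hwW, hw0⟩ := W.bot_or_exists_ne_zero.resolve_left hW
  have hnorm : ∑ i ∈ Finset.range q, φ (s ^ i) w = 0 :=
    eq_zero_of_apply_eq_self hp hq hpq hVp φ hG hs
      (apply_sum_range_pow_eq_self φ (hs ▸ pow_orderOf_eq_one s) w)
  have hcosets : ∀ i ∈ Finset.range q, i ≠ 0 →
      rep ((s ^ i : S) : S ⧸ H) ≠ rep ((s ^ 0 : S) : S ⧸ H) := by
    intro i hi hi0 heq
    have hsi := congrArg (fun t => ((t.1 : S) : S ⧸ H)) heq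
    simp only [hrep] at hsi
    refine Subgroup.pow_notMem_of_orderOf_prime (hs ▸ hq) hsH (Nat.pos_of_ne_zero hi0)
      (hs ▸ Finset.mem_range.mp hi) ?_
    simpa using QuotientGroup.eq.mp hsi
  have hw : φ (s ^ 0) w = 0 :=
    hindep.apply_eq_zero_of_sum_eq_zero (f := fun i => φ (s ^ i) w)
      (Finset.mem_range.mpr hq.pos) (fun i _ => apply_mem_map_of_coe_eq φ hWH (hrep _) hwW)
      hcosets hnorm
  exact hw0 (by simpa using hw)

theorem stmt_4 {p q : ℕ} (hp : p.Prime) (hq : q.Prime) (hpq : p ≠ q)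
    (V : Type) [AddCommGroup V] [Finite V] [Nontrivial V] (hVp : ∀ v : V, p • v = 0)
    (S : Type) [Group S] [Finite S] (φ : S →* AddAut V)
    (hG : ∀ g : Multiplicative V ⋊[(addAutToMulAut V).comp φ] S, orderOf g ≠ p * q)
    (H : Subgroup S) (W : AddSubgroup V)
    (hWH : ∀ h ∈ H, ∀ w ∈ W, φ h w ∈ W)
    (T : Finset S) (hT : ∀ s : S, ∃! t : S, t ∈ T ∧ s * t⁻¹ ∈ H)
    (hindep : iSupIndep (fun t : T => W.map ((φ (t : S)).toAddMonoidHom)))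
    (hspan : (⨆ t : T, W.map ((φ (t : S)).toAddMonoidHom)) = ⊤) :
    ∀ s : S, orderOf s = q → s ∈ H :=
  stmt_4_general hp hq hpq V hVp S φ hG H W hWH T hT hindep hspan
end

section
/- Let G = (⟨a⟩ × C) ⋊ ⟨b⟩ where a has order 5, b has order 4, a^b = a², C is an elementary abelian 3-group (possibly trivial), and c^b = c⁻¹ for every c ∈ C. Then G is solvable, has a normal Sylow subgroup of order 5, its Gruenberg–Kegel graph is contained in the path 2−3−5 (i.e., G has no elements of order 10 or 15 and no elements of order pq for other prime pairs outside {2,3} and {3,5}), and every element g of G satisfies: every generator of ⟨g⟩ is conjugate in G to g or g⁻¹ (G is a cut group). -/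
/-!
Write `K = ⟨a⟩ ⊔ C`. Since `a` centralizes `C`, every element of `K` is a product of a commuting
pair from `⟨a⟩` and `C`, so `K` is abelian of exponent dividing `15`, its elements of order
dividing `5` are exactly `⟨a⟩`, and `b` acts on `K` by squaring. As `K` is normal and
`G = ⟨b⟩ K`, every element of `G` is `b ^ j * x` with `j < 4` and `x ∈ K`, and
`(b ^ j * x) ^ n = b ^ (j * n) * x ^ (1 + 2 ^ j + ⋯ + 2 ^ (j * (n - 1)))`. Hence element orders
divide `4` (for odd `j`), `6` (for `j = 2`) or `15` (for `j = 0`), which bounds the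
Gruenberg–Kegel graph and pins down the Sylow `5`-subgroup. For the cut property, a unit modulo a
divisor of `4` or `6` is `±1`, and a unit modulo a divisor of `15` is `±2 ^ i`, where
`g ∈ K` is conjugate to `g ^ 2 ^ i` by `b ^ i`.
-/

/-- `G` is a cut group: every generator of `⟨g⟩` is conjugate to `g` or `g⁻¹`, for all `g`. -/
def IsCutGroup (G : Type*) [Group G] : Prop :=
  ∀ g h : G, Subgroup.zpowers h = Subgroup.zpowers g → IsConj g h ∨ IsConj g⁻¹ h

open Subgroup

section General

variable {G : Type*} [Group G]

theorem Subgroup.exists_commute_mul_eq_of_mem_sup {H N : Subgroup G} (hHN : H ≤ centralizer N)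
    {x : G} (hx : x ∈ H ⊔ N) : ∃ y ∈ H, ∃ z ∈ N, Commute y z ∧ y * z = x := by
  rw [← SetLike.mem_coe, coe_mul_of_left_le_normalizer_right H N
    (hHN.trans (centralizer_le_normalizer _))] at hx
  obtain ⟨y, hy, z, hz, rfl⟩ := hx
  exact ⟨y, hy, z, hz, (mem_centralizer_iff.mp (hHN hy) z hz).symm, rfl⟩

theorem Subgroup.isMulCommutative_sup {H N : Subgroup G} [IsMulCommutative H]
    [IsMulCommutative N] (hHN : H ≤ centralizer N) : IsMulCommutative (H ⊔ N : Subgroup G) := by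
  rw [← closure_eq H, ← closure_eq N, ← closure_union]
  refine isMulCommutative_closure ?_
  rintro x (hx | hx) y (hy | hy)
  · exact setLike_mul_comm hx hy
  · exact (mem_centralizer_iff.mp (hHN hx) y hy).symm
  · exact mem_centralizer_iff.mp (hHN hy) x hx
  · exact setLike_mul_comm hx hy

theorem Subgroup.pow_mul_eq_one_of_mem_sup {H N : Subgroup G} (hHN : H ≤ centralizer N)
    {m n : ℕ} (hH : ∀ y ∈ H, y ^ m = 1) (hN : ∀ z ∈ N, z ^ n = 1) {x : G} (hx : x ∈ H ⊔ N) :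
    x ^ (m * n) = 1 := by
  obtain ⟨y, hy, z, hz, hyz, rfl⟩ := exists_commute_mul_eq_of_mem_sup hHN hx
  rw [hyz.mul_pow, pow_mul, hH y hy, mul_comm, pow_mul, hN z hz, one_pow, one_pow, one_mul]

theorem Subgroup.conj_eq_pow_of_mem_sup {H N : Subgroup G} (hHN : H ≤ centralizer N) {b : G}
    {r : ℕ} (hH : ∀ y ∈ H, b⁻¹ * y * b = y ^ r) (hN : ∀ z ∈ N, b⁻¹ * z * b = z ^ r) {x : G}
    (hx : x ∈ H ⊔ N) : b⁻¹ * x * b = x ^ r := by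
  obtain ⟨y, hy, z, hz, hyz, rfl⟩ := exists_commute_mul_eq_of_mem_sup hHN hx
  calc b⁻¹ * (y * z) * b = (b⁻¹ * y * b) * (b⁻¹ * z * b) := by group
    _ = (y * z) ^ r := by rw [hH y hy, hN z hz, hyz.mul_pow]

theorem Subgroup.mem_left_of_mem_sup_of_pow_eq_one {H N : Subgroup G} (hHN : H ≤ centralizer N)
    {m n : ℕ} (hmn : m.Coprime n) (hH : ∀ y ∈ H, y ^ m = 1) (hN : ∀ z ∈ N, z ^ n = 1) {x : G}
    (hx : x ∈ H ⊔ N) (hxm : x ^ m = 1) : x ∈ H := by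
  obtain ⟨y, hy, z, hz, hyz, rfl⟩ := exists_commute_mul_eq_of_mem_sup hHN hx
  have hzm : z ^ m = 1 := by rwa [hyz.mul_pow, hH y hy, one_mul] at hxm
  have hz : z = 1 := orderOf_eq_one_iff.mp <| Nat.eq_one_of_dvd_coprimes hmn
    (orderOf_dvd_of_pow_eq_one hzm) (orderOf_dvd_of_pow_eq_one (hN z hz))
  rwa [hz, mul_one]

theorem conj_eq_pow_of_mem_zpowers {a b : G} {r : ℕ} (h : b⁻¹ * a * b = a ^ r) {x : G}
    (hx : x ∈ zpowers a) : b⁻¹ * x * b = x ^ r := by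
  obtain ⟨i, rfl⟩ := mem_zpowers_iff.mp hx
  have hconj := conj_zpow (a := b⁻¹) (b := a) (i := i)
  rw [inv_inv] at hconj
  rw [← hconj, h, ← zpow_natCast, ← zpow_natCast, ← zpow_mul, ← zpow_mul, mul_comm]

theorem conj_pow_eq_pow_pow {K : Subgroup G} {b : G} {r : ℕ}
    (hK : ∀ x ∈ K, b⁻¹ * x * b = x ^ r) (j : ℕ) {x : G} (hx : x ∈ K) :
    (b ^ j)⁻¹ * x * b ^ j = x ^ r ^ j := by
  induction j with
  | zero => simp
  | succ j ih =>
    calc (b ^ (j + 1))⁻¹ * x * b ^ (j + 1) = b⁻¹ * ((b ^ j)⁻¹ * x * b ^ j) * b := by group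
      _ = x ^ r ^ (j + 1) := by rw [ih, hK _ (pow_mem hx _), ← pow_mul, pow_succ]

theorem mul_pow_eq_pow_mul_pow_geom_sum {x y : G} {r : ℕ} (h : y⁻¹ * x * y = x ^ r) (n : ℕ) :
    (y * x) ^ n = y ^ n * x ^ ∑ i ∈ Finset.range n, r ^ i := by
  induction n with
  | zero => simp
  | succ n ih =>
    set s := ∑ i ∈ Finset.range n, r ^ i
    have hconj : y⁻¹ * x ^ s * y = x ^ (r * s) := by
      rw [pow_mul, ← h]
      simpa using (conj_pow (a := y⁻¹) (b := x)).symm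
    calc (y * x) ^ (n + 1) = y ^ (n + 1) * (y⁻¹ * x ^ s * y) * x := by rw [pow_succ, ih]; group
      _ = y ^ (n + 1) * x ^ ∑ i ∈ Finset.range (n + 1), r ^ i := by
        rw [hconj, geom_sum_succ, pow_succ x, mul_assoc]

theorem pow_eq_one_of_pow_pow_eq_one {x : G} {p m k : ℕ} (hpm : p.Coprime m)
    (hx : orderOf x ∣ p * m) (hxk : x ^ p ^ k = 1) : x ^ p = 1 :=
  orderOf_dvd_iff_pow_eq_one.mp <| Nat.Coprime.dvd_of_dvd_mul_right
    (Nat.Coprime.coprime_dvd_left (orderOf_dvd_of_pow_eq_one hxk) (hpm.pow_left k)) hx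

theorem Subgroup.normal_of_forall_mem_iff_pow_eq_one {H : Subgroup G} {n : ℕ}
    (hH : ∀ x, x ∈ H ↔ x ^ n = 1) : H.Normal where
  conj_mem x hx g := by rw [hH, conj_pow, (hH x).mp hx, mul_one, mul_inv_cancel]

theorem exists_sylow_eq_of_forall_mem_iff_pow_eq_one [Finite G] {p : ℕ} [Fact p.Prime]
    {H : Subgroup G} (hH : ∀ x, x ∈ H ↔ x ^ p = 1)
    (hp : ∀ (x : G) (k : ℕ), x ^ p ^ k = 1 → x ^ p = 1) :
    ∃ P : Sylow p G, (P : Subgroup G) = H := by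
  have hHp : IsPGroup p H := fun x => ⟨1, Subtype.ext <| by simpa using (hH x).mp x.2⟩
  obtain ⟨P, hHP⟩ := hHp.exists_le_sylow
  refine ⟨P, le_antisymm (fun x hx => (hH x).mpr ?_) hHP⟩
  obtain ⟨k, hk⟩ := P.isPGroup' ⟨x, hx⟩
  exact hp x k (by simpa using congrArg Subtype.val hk)

instance Group.isSolvable_of_isMulCommutative [IsMulCommutative G] : Group.IsSolvable G :=
  Group.isSolvable_of_comm mul_comm'

theorem isSolvable_of_normal_sup_eq_top {N H : Subgroup G} [N.Normal] [Group.IsSolvable N]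
    [Group.IsSolvable H] (hNH : N ⊔ H = ⊤) : Group.IsSolvable G := by
  have : Group.IsSolvable (G ⧸ N) := by
    refine Group.isSolvable_of_surjective (f := (QuotientGroup.mk' N).comp H.subtype) fun q => ?_
    obtain ⟨g, rfl⟩ := QuotientGroup.mk'_surjective N q
    have hg : g ∈ H ⊔ N := by rw [sup_comm, hNH]; exact mem_top g
    obtain ⟨y, hy, z, hz, rfl⟩ := mem_sup_of_normal_right.mp hg
    exact ⟨⟨y, hy⟩, by simpa [QuotientGroup.eq_one_iff] using hz⟩
  exact Group.isSolvable_of_ker_le_range N.subtype (QuotientGroup.mk' N) (by simp)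

theorem exists_pow_mul_eq_of_sup_eq_top [Finite G] {K : Subgroup G} [K.Normal] {b : G}
    (hKb : K ⊔ zpowers b = ⊤) (g : G) : ∃ j < orderOf b, ∃ x ∈ K, g = b ^ j * x := by
  classical
  have hg : g ∈ zpowers b ⊔ K := by rw [sup_comm, hKb]; exact mem_top g
  obtain ⟨y, hy, x, hx, rfl⟩ := mem_sup_of_normal_right.mp hg
  obtain ⟨j, hj, rfl⟩ := Finset.mem_image.mp (mem_zpowers_iff_mem_range_orderOf.mp hy)
  exact ⟨j, Finset.mem_range.mp hj, x, hx, rfl⟩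

theorem isConj_or_isConj_inv_pow_of_modEq {g : G} {k s : ℕ} (hs : IsConj g (g ^ s))
    (hk : k ≡ s [MOD orderOf g] ∨ k + s ≡ 0 [MOD orderOf g]) :
    IsConj g (g ^ k) ∨ IsConj g⁻¹ (g ^ k) := by
  rcases hk with hk | hk
  · exact .inl (pow_eq_pow_iff_modEq.mpr hk ▸ hs)
  · have hinv : g ^ k = (g ^ s)⁻¹ := eq_inv_of_mul_eq_one_left <| by
      rw [← pow_add, ← pow_zero g, pow_eq_pow_iff_modEq]; exact hk
    obtain ⟨c, hc⟩ := hs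
    exact .inr ⟨c, hinv ▸ SemiconjBy.inv_right_iff.mpr hc⟩

theorem isCutGroup_of_forall_coprime [Finite G]
    (h : ∀ (g : G) (k : ℕ), k.Coprime (orderOf g) → IsConj g (g ^ k) ∨ IsConj g⁻¹ (g ^ k)) :
    IsCutGroup G := by
  intro g g' hgg'
  obtain ⟨k, rfl⟩ := mem_powers_iff_mem_zpowers.mpr (hgg' ▸ mem_zpowers g')
  refine h g k (Nat.coprime_comm.mp ?_)
  have hord : orderOf (g ^ k) = orderOf g := by
    rw [← Nat.card_zpowers, ← Nat.card_zpowers, hgg']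
  rw [orderOf_pow] at hord
  exact (Nat.div_eq_self.mp hord).resolve_left (orderOf_pos g).ne'

end General

theorem Nat.coprime_mod_left_iff {k n : ℕ} : (k % n).Coprime n ↔ k.Coprime n := by
  rw [Nat.Coprime, Nat.Coprime, ← Nat.gcd_rec, Nat.gcd_comm]

theorem Nat.modEq_one_or_add_one_modEq_zero {n k : ℕ} (hn : n ∣ 4 ∨ n ∣ 6) (hk : k.Coprime n) :
    k ≡ 1 [MOD n] ∨ k + 1 ≡ 0 [MOD n] := by
  have key : ∀ n < 7, (n ∣ 4 ∨ n ∣ 6) → ∀ r < n, r.Coprime n →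
      r ≡ 1 [MOD n] ∨ r + 1 ≡ 0 [MOD n] := by decide
  have hn6 : n ≤ 6 := by rcases hn with h | h <;> linarith [Nat.le_of_dvd (by norm_num) h]
  have hn0 : 0 < n := by rcases hn with h | h <;> exact Nat.pos_of_dvd_of_pos h (by norm_num)
  have hkn := (Nat.mod_modEq k n).symm
  exact (key n (by omega) hn (k % n) (Nat.mod_lt k hn0) (Nat.coprime_mod_left_iff.mpr hk)).imp
    hkn.trans (hkn.add_right 1).trans

theorem Nat.exists_modEq_two_pow {n k : ℕ} (hn : n ∣ 15) (hk : k.Coprime n) :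
    ∃ i, k ≡ 2 ^ i [MOD n] ∨ k + 2 ^ i ≡ 0 [MOD n] := by
  have key : ∀ n < 16, n ∣ 15 → ∀ r < n, r.Coprime n →
      ∃ i < 4, r ≡ 2 ^ i [MOD n] ∨ r + 2 ^ i ≡ 0 [MOD n] := by decide
  have hn0 : 0 < n := Nat.pos_of_dvd_of_pos hn (by norm_num)
  have hkn := (Nat.mod_modEq k n).symm
  obtain ⟨i, -, hi⟩ := key n (by linarith [Nat.le_of_dvd (by norm_num) hn]) hn (k % n)
    (Nat.mod_lt k hn0) (Nat.coprime_mod_left_iff.mpr hk)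
  exact ⟨i, hi.imp hkn.trans (hkn.add_right _).trans⟩

theorem Nat.eq_two_or_three_or_five_of_prime_dvd {p : ℕ} (hp : p.Prime)
    (h : p ∣ 4 ∨ p ∣ 6 ∨ p ∣ 15) : p = 2 ∨ p = 3 ∨ p = 5 := by
  have : p ≤ 15 := by rcases h with h | h | h <;> linarith [Nat.le_of_dvd (by norm_num) h]
  interval_cases p <;> simp_all +decide

theorem Nat.eq_two_three_or_three_five_of_prime_mul_dvd {p q : ℕ} (hp : p.Prime) (hq : q.Prime)
    (hpq : p < q) (h : p * q ∣ 4 ∨ p * q ∣ 6 ∨ p * q ∣ 15) :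
    (p = 2 ∧ q = 3) ∨ (p = 3 ∧ q = 5) := by
  have : p * q ≤ 15 := by rcases h with h | h | h <;> linarith [Nat.le_of_dvd (by norm_num) h]
  have := hp.two_le
  have hp3 : p ≤ 3 := by nlinarith
  have hq7 : q ≤ 7 := by nlinarith
  interval_cases p <;> interval_cases q <;> simp_all +decide

section SquaringAction

variable {G : Type*} [Group G] {K : Subgroup G} {b : G}

theorem orderOf_dvd_four_or_six_or_fifteen (hb : b ^ 4 = 1) (hK : ∀ x ∈ K, x ^ 15 = 1)
    (hbK : ∀ x ∈ K, b⁻¹ * x * b = x ^ 2) (hG : ∀ g : G, ∃ j < 4, ∃ x ∈ K, g = b ^ j * x)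
    (g : G) : orderOf g ∣ 4 ∨ orderOf g ∣ 6 ∨ (g ∈ K ∧ orderOf g ∣ 15) := by
  obtain ⟨j, hj, x, hx, rfl⟩ := hG g
  have hpow : ∀ n, 4 ∣ j * n → 15 ∣ ∑ i ∈ Finset.range n, (2 ^ j) ^ i → (b ^ j * x) ^ n = 1 := by
    rintro n ⟨c, hc⟩ ⟨d, hd⟩
    rw [mul_pow_eq_pow_mul_pow_geom_sum (conj_pow_eq_pow_pow hbK j hx), ← pow_mul, hc, hd,
      pow_mul, pow_mul, hb, hK x hx, one_pow, one_pow, one_mul]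
  interval_cases j
  · simpa using .inr (.inr ⟨hx, orderOf_dvd_of_pow_eq_one (hK x hx)⟩)
  · exact .inl (orderOf_dvd_of_pow_eq_one (hpow 4 (by norm_num) (by decide)))
  · exact .inr (.inl (orderOf_dvd_of_pow_eq_one (hpow 6 (by norm_num) (by decide))))
  · exact .inl (orderOf_dvd_of_pow_eq_one (hpow 4 (by norm_num) (by decide)))

theorem mem_of_pow_five_eq_one {H : Subgroup G} (hb : b ^ 4 = 1) (hK : ∀ x ∈ K, x ^ 15 = 1)
    (hbK : ∀ x ∈ K, b⁻¹ * x * b = x ^ 2) (hG : ∀ g : G, ∃ j < 4, ∃ x ∈ K, g = b ^ j * x)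
    (hKH : ∀ x ∈ K, x ^ 5 = 1 → x ∈ H) {x : G} (hx : x ^ 5 = 1) : x ∈ H := by
  have hcop : ∀ m, m.Coprime 5 → orderOf x ∣ m → x ∈ H := fun m hm h => by
    rw [orderOf_eq_one_iff.mp (Nat.eq_one_of_dvd_coprimes hm h (orderOf_dvd_of_pow_eq_one hx))]
    exact one_mem H
  rcases orderOf_dvd_four_or_six_or_fifteen hb hK hbK hG x with h | h | ⟨hxK, -⟩
  · exact hcop 4 (by norm_num) h
  · exact hcop 6 (by norm_num) h
  · exact hKH x hxK hx

theorem isCutGroup_of_conj_eq_sq [Finite G] (hb : b ^ 4 = 1) (hK : ∀ x ∈ K, x ^ 15 = 1)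
    (hbK : ∀ x ∈ K, b⁻¹ * x * b = x ^ 2) (hG : ∀ g : G, ∃ j < 4, ∃ x ∈ K, g = b ^ j * x) :
    IsCutGroup G := by
  refine isCutGroup_of_forall_coprime fun g k hk => ?_
  rcases orderOf_dvd_four_or_six_or_fifteen hb hK hbK hG g with h | h | ⟨hg, h⟩
  · exact isConj_or_isConj_inv_pow_of_modEq (by rw [pow_one])
      (Nat.modEq_one_or_add_one_modEq_zero (.inl h) hk)
  · exact isConj_or_isConj_inv_pow_of_modEq (by rw [pow_one])
      (Nat.modEq_one_or_add_one_modEq_zero (.inr h) hk)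
  · obtain ⟨i, hi⟩ := Nat.exists_modEq_two_pow h hk
    refine isConj_or_isConj_inv_pow_of_modEq (isConj_iff.mpr ⟨(b ^ i)⁻¹, ?_⟩) hi
    rw [inv_inv]
    exact conj_pow_eq_pow_pow hbK i hg

end SquaringAction

theorem stmt_10_general {G : Type} [Group G] [Finite G] (a b : G) (C : Subgroup G)
    (ha : orderOf a = 5) (hb : orderOf b = 4) (hab : b⁻¹ * a * b = a ^ 2)
    (hC3 : ∀ c ∈ C, c ^ 3 = 1)
    (hCcomm : ∀ c ∈ C, ∀ d ∈ C, c * d = d * c)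
    (hCb : ∀ c ∈ C, b⁻¹ * c * b = c⁻¹)
    (haC : ∀ c ∈ C, a * c = c * a)
    (hKnormal : (Subgroup.zpowers a ⊔ C).Normal)
    (hKtop : (Subgroup.zpowers a ⊔ C) ⊔ Subgroup.zpowers b = ⊤) :
    IsSolvable G ∧
    (∃ P : Sylow 5 G, (P : Subgroup G) = Subgroup.zpowers a ∧ (Subgroup.zpowers a).Normal) ∧
    (∀ p : ℕ, p.Prime → (∃ g : G, orderOf g = p) → p = 2 ∨ p = 3 ∨ p = 5) ∧
    (∀ p q : ℕ, p.Prime → q.Prime → p < q → (∃ g : G, orderOf g = p * q) →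
      (p = 2 ∧ q = 3) ∨ (p = 3 ∧ q = 5)) ∧
    IsCutGroup G := by
  have haC' : zpowers a ≤ centralizer C :=
    zpowers_le.mpr (mem_centralizer_iff.mpr fun c hc => (haC c hc).symm)
  have ha5 : ∀ x ∈ zpowers a, x ^ 5 = 1 := fun x hx =>
    orderOf_dvd_iff_pow_eq_one.mp (ha ▸ orderOf_dvd_of_mem_zpowers hx)
  have hK15 : ∀ x ∈ zpowers a ⊔ C, x ^ 15 = 1 := fun x => pow_mul_eq_one_of_mem_sup haC' ha5 hC3
  have hbK : ∀ x ∈ zpowers a ⊔ C, b⁻¹ * x * b = x ^ 2 := fun x =>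
    conj_eq_pow_of_mem_sup haC' (fun _ => conj_eq_pow_of_mem_zpowers hab) fun c hc => by
      rw [hCb c hc, inv_eq_of_mul_eq_one_right (by rw [← pow_succ']; exact hC3 c hc)]
  have hG : ∀ g : G, ∃ j < 4, ∃ x ∈ zpowers a ⊔ C, g = b ^ j * x :=
    hb ▸ exists_pow_mul_eq_of_sup_eq_top hKtop
  have hb4 : b ^ 4 = 1 := hb ▸ pow_orderOf_eq_one b
  have horder : ∀ g : G, orderOf g ∣ 4 ∨ orderOf g ∣ 6 ∨ orderOf g ∣ 15 := fun g =>
    (orderOf_dvd_four_or_six_or_fifteen hb4 hK15 hbK hG g).imp_right (Or.imp_right And.right)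
  have hA : ∀ x, x ∈ zpowers a ↔ x ^ 5 = 1 := fun x =>
    ⟨ha5 x, mem_of_pow_five_eq_one hb4 hK15 hbK hG fun y hy =>
      mem_left_of_mem_sup_of_pow_eq_one haC' (by norm_num) ha5 hC3 hy⟩
  have h5 : ∀ (x : G) (k : ℕ), x ^ 5 ^ k = 1 → x ^ 5 = 1 := fun x k =>
    pow_eq_one_of_pow_pow_eq_one (m := 12) (by norm_num) <| by
      rcases horder x with h | h | h <;> exact h.trans (by norm_num)
  have : IsMulCommutative C := .of_setLike_mul_comm hCcomm
  have : IsMulCommutative (zpowers a ⊔ C : Subgroup G) := isMulCommutative_sup haC'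
  refine ⟨isSolvable_of_normal_sup_eq_top hKtop, ?_, ?_, ?_,
    isCutGroup_of_conj_eq_sq hb4 hK15 hbK hG⟩
  · have : Fact (Nat.Prime 5) := ⟨by norm_num⟩
    obtain ⟨P, hP⟩ := exists_sylow_eq_of_forall_mem_iff_pow_eq_one hA h5
    exact ⟨P, hP, normal_of_forall_mem_iff_pow_eq_one hA⟩
  · rintro p hp ⟨g, rfl⟩
    exact Nat.eq_two_or_three_or_five_of_prime_dvd hp (horder g)
  · rintro p q hp hq hpq ⟨g, hg⟩
    exact Nat.eq_two_three_or_three_five_of_prime_mul_dvd hp hq hpq (hg ▸ horder g)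

theorem stmt_10 {G : Type} [Group G] [Finite G] (a b : G) (C : Subgroup G)
    (ha : orderOf a = 5) (hb : orderOf b = 4) (hab : b⁻¹ * a * b = a ^ 2)
    (hC3 : ∀ c ∈ C, c ^ 3 = 1)
    (hCcomm : ∀ c ∈ C, ∀ d ∈ C, c * d = d * c)
    (hCb : ∀ c ∈ C, b⁻¹ * c * b = c⁻¹)
    (haC : ∀ c ∈ C, a * c = c * a)
    (haCdisj : Subgroup.zpowers a ⊓ C = ⊥)
    (hKnormal : (Subgroup.zpowers a ⊔ C).Normal)
    (hKdisj : (Subgroup.zpowers a ⊔ C) ⊓ Subgroup.zpowers b = ⊥)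
    (hKtop : (Subgroup.zpowers a ⊔ C) ⊔ Subgroup.zpowers b = ⊤) :
    IsSolvable G ∧
    (∃ P : Sylow 5 G, (P : Subgroup G) = Subgroup.zpowers a ∧ (Subgroup.zpowers a).Normal) ∧
    (∀ p : ℕ, p.Prime → (∃ g : G, orderOf g = p) → p = 2 ∨ p = 3 ∨ p = 5) ∧
    (∀ p q : ℕ, p.Prime → q.Prime → p < q → (∃ g : G, orderOf g = p * q) →
      (p = 2 ∧ q = 3) ∨ (p = 3 ∧ q = 5)) ∧
    IsCutGroup G :=
  stmt_10_general a b C ha hb hab hC3 hCcomm hCb haC hKnormal hKtop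
end

section
/- Let G be a finite cut group whose Sylow 2-subgroups are isomorphic to the quaternion group Q8, and let p be an odd prime. If a ∈ G has order 4p^n with n ≥ 1, then every 2-element of N_G(⟨a⟩) commutes with the p-part a_p of a. -/
open Subgroup

section Conjugation

variable {G : Type*} [Group G]

lemma Commute.mem_zpowers_mul_of_coprime {x y : G} (h : Commute x y)
    (hco : (orderOf x).Coprime (orderOf y)) : x ∈ zpowers (x * y) := by
  obtain ⟨m, hm⟩ := exists_pow_eq_self_of_coprime hco.symm
  have hx : (x * y) ^ (orderOf y * m) = x := by
    rw [pow_mul, h.mul_pow, pow_orderOf_eq_one, mul_one, hm]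
  simpa only [hx] using npow_mem_zpowers (x * y) (orderOf y * m)

lemma Commute.mem_zpowers_mul_of_coprime_right {x y : G} (h : Commute x y)
    (hco : (orderOf x).Coprime (orderOf y)) : y ∈ zpowers (x * y) := by
  simpa only [h.eq] using h.symm.mem_zpowers_mul_of_coprime hco.symm

lemma commute_of_mem_zpowers {x b c : G} (hx : x ∈ zpowers b) (hbc : Commute b c) :
    Commute x c := by
  obtain ⟨t, rfl⟩ := mem_zpowers_iff.mp hx
  exact hbc.zpow_left t

lemma Commute.zpow_eq_self_of_conj_eq_zpow {w b : G} {u : ℤ} (hc : Commute w b)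
    (h : w * b * w⁻¹ = b ^ u) : b ^ u = b := by
  rw [← h, hc.eq, mul_inv_cancel_right]

lemma zpow_eq_self_iff_modEq {b : G} {u : ℤ} : b ^ u = b ↔ u ≡ 1 [ZMOD orderOf b] := by
  rw [← zpow_eq_zpow_iff_modEq, zpow_one]

lemma zpow_eq_inv_iff_modEq {b : G} {u : ℤ} : b ^ u = b⁻¹ ↔ u ≡ -1 [ZMOD orderOf b] := by
  rw [← zpow_eq_zpow_iff_modEq, zpow_neg_one]

lemma conj_eq_zpow_of_mem_zpowers {w a c : G} {u : ℤ} (h : w * a * w⁻¹ = a ^ u)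
    (hc : c ∈ zpowers a) : w * c * w⁻¹ = c ^ u := by
  obtain ⟨t, rfl⟩ := mem_zpowers_iff.mp hc
  rw [← conj_zpow, h, ← zpow_mul, ← zpow_mul, mul_comm]

lemma pow_conj_eq_zpow_pow {w a : G} {u : ℤ} (h : w * a * w⁻¹ = a ^ u) (d : ℕ) :
    w ^ d * a * (w ^ d)⁻¹ = a ^ (u ^ d) := by
  induction d with
  | zero => simp
  | succ d ih =>
    rw [pow_succ', mul_inv_rev, show w * w ^ d * a * ((w ^ d)⁻¹ * w⁻¹)
      = w * (w ^ d * a * (w ^ d)⁻¹) * w⁻¹ by group, ih, ← conj_zpow, h, ← zpow_mul, pow_succ']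

lemma mem_normalizer_zpowers_of_conj_mem [Finite G] {x b : G} (h : x * b * x⁻¹ ∈ zpowers b) :
    x ∈ normalizer (zpowers b : Set G) := by
  refine mem_normalizer_fintype fun c hc ↦ ?_
  obtain ⟨t, rfl⟩ := mem_zpowers_iff.mp hc
  rw [SetLike.mem_coe, ← conj_zpow]
  exact zpow_mem h t

lemma exists_pow_orderOf_eq_prime_pow [Finite G] {p : ℕ} (hp : p.Prime) (w : G) :
    ∃ d, ¬ p ∣ d ∧ ∃ k, orderOf (w ^ d) = p ^ k := by
  have hw : orderOf w ≠ 0 := (orderOf_pos w).ne'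
  exact ⟨orderOf w / p ^ (orderOf w).factorization p, Nat.not_dvd_ordCompl hp hw,
    (orderOf w).factorization p, orderOf_pow_orderOf_div hw (Nat.ordProj_dvd _ p)⟩

end Conjugation

lemma QuaternionGroup.exists_sq_eq_pow :
    ∀ g h : QuaternionGroup 2, h ^ 2 ≠ 1 → ∃ k : Fin 4, g ^ 2 = h ^ (k : ℕ) := by
  decide

lemma QuaternionGroup.exists_eq_pow_of_commute :
    ∀ g h : QuaternionGroup 2, h ^ 2 ≠ 1 → g * h = h * g → ∃ k : Fin 4, g = h ^ (k : ℕ) := by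
  decide

section QuaternionSylow

variable {G : Type*} [Group G] [Finite G]

lemma exists_quaternion_embedding (hQ8 : ∀ P : Sylow 2 G, Nonempty (P ≃* QuaternionGroup 2))
    {x b : G} {k l : ℕ} (hx : orderOf x = 2 ^ k) (hb : orderOf b = 2 ^ l)
    (hxb : x * b * x⁻¹ ∈ zpowers b) :
    ∃ f : QuaternionGroup 2 →* G, Function.Injective f ∧ x ∈ f.range ∧ b ∈ f.range := by
  have hxP : IsPGroup 2 (zpowers x) := IsPGroup.of_card (by rw [Nat.card_zpowers, hx])
  have hbP : IsPGroup 2 (zpowers b) := IsPGroup.of_card (by rw [Nat.card_zpowers, hb])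
  obtain ⟨P, hP⟩ := (hxP.to_sup_of_normal_right' hbP
    (zpowers_le.mpr (mem_normalizer_zpowers_of_conj_mem hxb))).exists_le_sylow
  obtain ⟨e⟩ := hQ8 P
  refine ⟨(P : Subgroup G).subtype.comp e.symm.toMonoidHom,
    Subtype.val_injective.comp e.symm.injective, ?_, ?_⟩
  · exact ⟨e ⟨x, hP (mem_sup_left (mem_zpowers x))⟩, by simp⟩
  · exact ⟨e ⟨b, hP (mem_sup_right (mem_zpowers b))⟩, by simp⟩

lemma sq_mem_zpowers_of_conj_mem (hQ8 : ∀ P : Sylow 2 G, Nonempty (P ≃* QuaternionGroup 2))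
    {x b : G} {k : ℕ} (hx : orderOf x = 2 ^ k) (hb : orderOf b = 4)
    (hxb : x * b * x⁻¹ ∈ zpowers b) : x ^ 2 ∈ zpowers b := by
  obtain ⟨f, hf, ⟨g, rfl⟩, ⟨h, rfl⟩⟩ := exists_quaternion_embedding hQ8 hx (l := 2) hb hxb
  have hh : h ^ 2 ≠ 1 :=
    pow_ne_one_of_lt_orderOf two_ne_zero (by rw [← orderOf_injective f hf, hb]; norm_num)
  obtain ⟨j, hj⟩ := QuaternionGroup.exists_sq_eq_pow g h hh
  rw [← map_pow, hj, map_pow]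
  exact npow_mem_zpowers _ _

lemma mem_zpowers_of_commute (hQ8 : ∀ P : Sylow 2 G, Nonempty (P ≃* QuaternionGroup 2))
    {x b : G} {k : ℕ} (hx : orderOf x = 2 ^ k) (hb : orderOf b = 4) (hxb : Commute x b) :
    x ∈ zpowers b := by
  have hconj : x * b * x⁻¹ ∈ zpowers b := by
    rw [hxb.eq, mul_inv_cancel_right]
    exact mem_zpowers b
  obtain ⟨f, hf, ⟨g, rfl⟩, ⟨h, rfl⟩⟩ := exists_quaternion_embedding hQ8 hx (l := 2) hb hconj
  have hh : h ^ 2 ≠ 1 :=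
    pow_ne_one_of_lt_orderOf two_ne_zero (by rw [← orderOf_injective f hf, hb]; norm_num)
  obtain ⟨j, rfl⟩ :=
    QuaternionGroup.exists_eq_pow_of_commute g h hh (hf (by simpa only [map_mul] using hxb.eq))
  rw [map_pow]
  exact npow_mem_zpowers _ _

lemma commute_of_conj_eq_zpow_of_modEq_one
    (hQ8 : ∀ P : Sylow 2 G, Nonempty (P ≃* QuaternionGroup 2)) {x b c : G} {k : ℕ} {m : ℤ}
    (hx : orderOf x = 2 ^ k) (hb : orderOf b = 4) (hxb : x * b * x⁻¹ = b ^ m)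
    (hm : m ≡ 1 [ZMOD 4]) (hbc : Commute b c) : Commute x c :=
  have hxb' : Commute x b :=
    mul_inv_eq_iff_eq_mul.mp (hxb.trans (zpow_eq_self_iff_modEq.mpr (by simpa [hb] using hm)))
  commute_of_mem_zpowers (mem_zpowers_of_commute hQ8 hx hb hxb') hbc

lemma sq_modEq_one_of_conj_eq_zpow
    (hQ8 : ∀ P : Sylow 2 G, Nonempty (P ≃* QuaternionGroup 2)) {x b c : G} {k : ℕ} {m : ℤ}
    (hx : orderOf x = 2 ^ k) (hb : orderOf b = 4) (hxb : x * b * x⁻¹ = b ^ m)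
    (hbc : Commute b c) (hxc : x * c * x⁻¹ = c ^ m) : m ^ 2 ≡ 1 [ZMOD orderOf c] :=
  have hsq : x ^ 2 ∈ zpowers b :=
    sq_mem_zpowers_of_conj_mem hQ8 hx hb (hxb ▸ zpow_mem_zpowers b m)
  zpow_eq_self_iff_modEq.mp
    ((commute_of_mem_zpowers hsq hbc).zpow_eq_self_of_conj_eq_zpow (pow_conj_eq_zpow_pow hxc 2))

end QuaternionSylow

namespace Int

lemma modEq_one_or_neg_one_of_sq_modEq_one_four {m : ℤ} (h : m ^ 2 ≡ 1 [ZMOD 4]) :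
    m ≡ 1 [ZMOD 4] ∨ m ≡ -1 [ZMOD 4] := by
  unfold ModEq at *
  rw [sq, mul_emod] at h
  have h0 : 0 ≤ m % 4 := emod_nonneg m (by norm_num)
  have h4 : m % 4 < 4 := emod_lt_of_pos m (by norm_num)
  interval_cases hm : m % 4 <;> simp_all

lemma modEq_one_or_neg_one_of_sq_modEq_one {p : ℕ} (hp : p.Prime) (hp2 : p ≠ 2) {n : ℕ}
    {m : ℤ} (h : m ^ 2 ≡ 1 [ZMOD p ^ n]) : m ≡ 1 [ZMOD p ^ n] ∨ m ≡ -1 [ZMOD p ^ n] := by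
  have hpZ : Prime (p : ℤ) := Nat.prime_iff_prime_int.mp hp
  have hdvd : (p : ℤ) ^ n ∣ (m + 1) * (m - 1) := by
    rw [show (m + 1) * (m - 1) = m ^ 2 - 1 by ring]
    exact h.symm.dvd
  simp only [modEq_comm (a := m), modEq_iff_dvd, sub_neg_eq_add]
  by_cases hp1 : (p : ℤ) ∣ m + 1
  · refine .inr (hpZ.pow_dvd_of_dvd_mul_left n (fun hp1' ↦ ?_) (mul_comm (m + 1) _ ▸ hdvd))
    have h2 : (p : ℤ) ∣ 2 := by simpa using dvd_sub hp1 hp1'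
    exact hp2 ((Nat.prime_dvd_prime_iff_eq hp Nat.prime_two).mp (by exact_mod_cast h2))
  · exact .inl (hpZ.pow_dvd_of_dvd_mul_left n hp1 hdvd)

lemma exists_modEq_one_modEq_neg_one {q : ℕ} (hq : Odd q) :
    ∃ u : ℤ, u ≡ 1 [ZMOD 4] ∧ u ≡ -1 [ZMOD q] := by
  obtain ⟨s, t, hst⟩ : IsCoprime ((4 : ℕ) : ℤ) q :=
    Nat.isCoprime_iff_coprime.mpr (Nat.Coprime.pow_left 2 (Nat.coprime_two_left.mpr hq))
  refine ⟨1 - 8 * s, modEq_iff_dvd.mpr ⟨2 * s, by ring⟩,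
    modEq_iff_dvd.mpr ⟨-2 * t, by push_cast at hst; linear_combination 2 * hst⟩⟩

end Int

lemma IsCutGroup.eq_one_of_isConj_inv {G : Type*} [Group G] [Finite G] (hcut : IsCutGroup G)
    (hQ8 : ∀ P : Sylow 2 G, Nonempty (P ≃* QuaternionGroup 2)) {a2 ap : G}
    (hcomm : Commute a2 ap) (ha2 : orderOf a2 = 4) (hap : Odd (orderOf ap))
    (hconj : IsConj (a2 * ap) (a2 * ap)⁻¹) : ap = 1 := by
  set a := a2 * ap
  have hco : (orderOf a2).Coprime (orderOf ap) :=
    ha2 ▸ Nat.Coprime.pow_left 2 (Nat.coprime_two_left.mpr hap)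
  obtain ⟨u, hu4, huq⟩ := Int.exists_modEq_one_modEq_neg_one hap
  have hgen : zpowers (a ^ u) = zpowers a := by
    have hsq : (a ^ u) ^ u = a := by
      rw [← zpow_mul, hcomm.mul_zpow,
        zpow_eq_self_iff_modEq.mpr (ha2 ▸ by simpa using hu4.mul hu4),
        zpow_eq_self_iff_modEq.mpr (by simpa using huq.mul huq)]
    exact le_antisymm (zpowers_le.mpr (zpow_mem_zpowers a u))
      (zpowers_le.mpr (by simpa only [hsq] using zpow_mem_zpowers (a ^ u) u))
  obtain ⟨w, hw⟩ : ∃ w, w * a * w⁻¹ = a ^ u :=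
    isConj_iff.mp ((hcut a (a ^ u) hgen).elim id hconj.trans)
  -- pass to the 2-part `y = w ^ d` of `w`; as `d` is odd, `u ^ d` keeps the congruences of `u`
  obtain ⟨d, hd2, k, hk⟩ := exists_pow_orderOf_eq_prime_pow Nat.prime_two w
  have hd : Odd d := Nat.odd_iff.mpr (Nat.two_dvd_ne_zero.mp hd2)
  have hy := pow_conj_eq_zpow_pow hw d
  have hya2 := conj_eq_zpow_of_mem_zpowers hy (hcomm.mem_zpowers_mul_of_coprime hco)
  have hyap := conj_eq_zpow_of_mem_zpowers hy (hcomm.mem_zpowers_mul_of_coprime_right hco)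
  have hcomm_y := commute_of_conj_eq_zpow_of_modEq_one hQ8 hk ha2 hya2
    (by simpa using hu4.pow d) hcomm
  rw [zpow_eq_inv_iff_modEq.mpr (by simpa [hd.neg_one_pow] using huq.pow d), hcomm_y.eq,
    mul_inv_cancel_right, eq_comm, inv_eq_iff_mul_eq_one, ← sq] at hyap
  exact orderOf_eq_one_iff.mp
    ((Nat.coprime_two_right.mpr hap).eq_one_of_dvd (orderOf_dvd_of_pow_eq_one hyap))

theorem stmt_14_general {G : Type} [Group G] [Finite G] (hcut : IsCutGroup G)
    (hQ8 : ∀ P : Sylow 2 G, Nonempty (P ≃* QuaternionGroup 2))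
    {p : ℕ} (hp : p.Prime) (hpodd : p ≠ 2)
    {n : ℕ} (a : G)
    (a2 ap : G) (hdecomp : a = a2 * ap) (hcomm : Commute a2 ap)
    (ha2 : orderOf a2 = 4) (hap : orderOf ap = p ^ n) :
    ∀ x ∈ Subgroup.normalizer (Subgroup.zpowers a : Set G), (∃ k : ℕ, orderOf x = 2 ^ k) →
      Commute x ap := by
  rintro x hx ⟨k, hk⟩
  subst hdecomp
  have hodd : Odd (orderOf ap) := hap ▸ (hp.odd_of_ne_two hpodd).pow
  have hco : (orderOf a2).Coprime (orderOf ap) :=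
    ha2 ▸ Nat.Coprime.pow_left 2 (Nat.coprime_two_left.mpr hodd)
  obtain ⟨m, hm⟩ : ∃ m : ℤ, (a2 * ap) ^ m = x * (a2 * ap) * x⁻¹ :=
    mem_zpowers_iff.mp ((mem_normalizer_iff.mp hx _).mp (mem_zpowers _))
  have hx2 := conj_eq_zpow_of_mem_zpowers hm.symm (hcomm.mem_zpowers_mul_of_coprime hco)
  have hxp := conj_eq_zpow_of_mem_zpowers hm.symm (hcomm.mem_zpowers_mul_of_coprime_right hco)
  have hm4 : m ^ 2 ≡ 1 [ZMOD 4] := by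
    simpa [ha2] using sq_modEq_one_of_conj_eq_zpow hQ8 hk ha2 hx2 (.refl a2) hx2
  have hmq : m ^ 2 ≡ 1 [ZMOD p ^ n] := by
    simpa [hap] using sq_modEq_one_of_conj_eq_zpow hQ8 hk ha2 hx2 hcomm hxp
  rcases Int.modEq_one_or_neg_one_of_sq_modEq_one_four hm4 with h4 | h4
  · exact commute_of_conj_eq_zpow_of_modEq_one hQ8 hk ha2 hx2 h4 hcomm
  rcases Int.modEq_one_or_neg_one_of_sq_modEq_one hp hpodd hmq with hq | hq
  · exact mul_inv_eq_iff_eq_mul.mp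
      (hxp.trans (zpow_eq_self_iff_modEq.mpr (by simpa [hap] using hq)))
  have hinv : IsConj (a2 * ap) (a2 * ap)⁻¹ := by
    refine isConj_iff.mpr ⟨x, ?_⟩
    rw [← hm, hcomm.mul_zpow, zpow_eq_inv_iff_modEq.mpr (by simpa [ha2] using h4),
      zpow_eq_inv_iff_modEq.mpr (by simpa [hap] using hq), mul_inv_rev, hcomm.inv_inv.eq]
  rw [hcut.eq_one_of_isConj_inv hQ8 hcomm ha2 hodd hinv]
  exact Commute.one_right x

theorem stmt_14 {G : Type} [Group G] [Finite G] (hcut : IsCutGroup G)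
    (hQ8 : ∀ P : Sylow 2 G, Nonempty (P ≃* QuaternionGroup 2))
    {p : ℕ} (hp : p.Prime) (hpodd : p ≠ 2)
    {n : ℕ} (hn : 1 ≤ n) (a : G) (ha : orderOf a = 4 * p ^ n)
    (a2 ap : G) (hdecomp : a = a2 * ap) (hcomm : Commute a2 ap)
    (ha2 : orderOf a2 = 4) (hap : orderOf ap = p ^ n) :
    ∀ x ∈ Subgroup.normalizer (Subgroup.zpowers a : Set G), (∃ k : ℕ, orderOf x = 2 ^ k) →
      Commute x ap :=
  stmt_14_general hcut hQ8 hp hpodd a a2 ap hdecomp hcomm ha2 hap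
end

section
/- Let G be a finite cut group whose Sylow 2-subgroups are isomorphic to Q8. Then G contains no element of order 105 = 3·5·7 and no element of order 84 = 4·3·7. -/
open Subgroup
open scoped commutatorElement

section

variable {G : Type*} [Group G]

lemma MulAut.ext_zpowers {g : G} {σ τ : MulAut (zpowers g)}
    (h : σ ⟨g, mem_zpowers g⟩ = τ ⟨g, mem_zpowers g⟩) : σ = τ := by
  ext ⟨_, k, rfl⟩
  have hk : (⟨g ^ k, k, rfl⟩ : zpowers g) = ⟨g, mem_zpowers g⟩ ^ k := rfl
  rw [hk, map_zpow, map_zpow, h]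

lemma zpowers_mulAut_apply_generator {g : G} (σ : MulAut (zpowers g)) :
    zpowers (σ ⟨g, mem_zpowers g⟩ : G) = zpowers g := by
  refine le_antisymm (zpowers_le.2 (σ _).2) (zpowers_le.2 ?_)
  obtain ⟨m, hm⟩ := (σ.symm ⟨g, mem_zpowers g⟩).2
  refine ⟨m, congrArg Subtype.val (?_ : σ ⟨g, mem_zpowers g⟩ ^ m = ⟨g, mem_zpowers g⟩)⟩
  rw [← map_zpow]
  exact (congrArg σ (Subtype.ext hm)).trans (σ.apply_symm_apply _)

lemma mem_range_normalizerMonoidHom_of_conj_eq {g c : G} {σ : MulAut (zpowers g)}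
    (h : c * g * c⁻¹ = σ ⟨g, mem_zpowers g⟩) :
    σ ∈ (zpowers g).normalizerMonoidHom.range := by
  have hc : c ∈ normalizer (zpowers g : Set G) := by
    rw [mem_normalizer_iff_map_conj_eq, MonoidHom.map_zpowers]
    change zpowers (c * g * c⁻¹) = _
    rw [h, zpowers_mulAut_apply_generator]
  exact ⟨⟨c, hc⟩, MulAut.ext_zpowers (Subtype.ext h)⟩

lemma IsCutGroup.index_range_normalizerMonoidHom_dvd_two (hcut : IsCutGroup G) (g : G) :
    (zpowers g).normalizerMonoidHom.range.index ∣ 2 := by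
  let inv : MulAut (zpowers g) := letI := IsCyclic.commGroup (α := zpowers g); MulEquiv.inv _
  refine index_dvd_two_iff'.2 ⟨inv, fun σ => ?_⟩
  rcases hcut g _ (zpowers_mulAut_apply_generator σ) with hconj | hconj
  · obtain ⟨c, hc⟩ := isConj_iff.1 hconj
    exact .inr (mem_range_normalizerMonoidHom_of_conj_eq hc)
  · obtain ⟨c, hc⟩ := isConj_iff.1 hconj
    refine .inl (mem_range_normalizerMonoidHom_of_conj_eq (c := c) (σ := inv * σ) ?_)
    change c * g * c⁻¹ = (σ ⟨g, mem_zpowers g⟩ : G)⁻¹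
    rw [← hc]
    group

lemma card_normalizer_eq_card_centralizer_mul (H : Subgroup G) :
    Nat.card (normalizer (H : Set G)) =
      Nat.card (centralizer (H : Set G)) * Nat.card H.normalizerMonoidHom.range := by
  rw [card_eq_card_quotient_mul_card_subgroup H.normalizerMonoidHom.ker, mul_comm,
    Nat.card_congr (QuotientGroup.quotientKerEquivRange _).toEquiv, normalizerMonoidHom_ker,
    Nat.card_congr (subgroupOfEquivOfLe (centralizer_le_normalizer _)).toEquiv]

lemma orderOf_dvd_card_centralizer_zpowers (g : G) :
    orderOf g ∣ Nat.card (centralizer (zpowers g : Set G)) := by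
  rw [← Nat.card_zpowers]
  exact card_dvd_of_le (le_centralizer_iff_isMulCommutative.2 inferInstance)

lemma commutator_normalizer_zpowers_le_centralizer (g : G) :
    ⁅normalizer (zpowers g : Set G), normalizer (zpowers g : Set G)⁆ ≤
      centralizer (zpowers g : Set G) := by
  rw [commutator_le]
  intro x hx y hy
  let _ : CommGroup (MulAut (zpowers g)) :=
    (IsCyclic.mulAutMulEquiv _).toMonoidHom.commGroupOfInjective
      (IsCyclic.mulAutMulEquiv _).injective
  let a : normalizer (zpowers g : Set G) := ⟨x, hx⟩
  let b : normalizer (zpowers g : Set G) := ⟨y, hy⟩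
  have hab : ⁅a, b⁆ ∈ (zpowers g).normalizerMonoidHom.ker := by
    rw [MonoidHom.mem_ker, map_commutatorElement, commutatorElement_eq_one_iff_mul_comm, mul_comm]
  rwa [normalizerMonoidHom_ker, mem_subgroupOf] at hab

variable [Finite G]

lemma card_range_normalizerMonoidHom_mul_index (g : G) :
    Nat.card (zpowers g).normalizerMonoidHom.range * (zpowers g).normalizerMonoidHom.range.index =
      (orderOf g).totient := by
  rw [card_mul_index, IsCyclic.card_mulAut, Nat.card_zpowers]

lemma IsCutGroup.two_pow_four_dvd_card_of_orderOf_eq_84 (hcut : IsCutGroup G) {g : G}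
    (hg : orderOf g = 84) : 2 ^ 4 ∣ Nat.card G := by
  have hN := card_subgroup_dvd_card (normalizer (zpowers g : Set G))
  rw [card_normalizer_eq_card_centralizer_mul] at hN
  have htot := card_range_normalizerMonoidHom_mul_index g
  have hc := orderOf_dvd_card_centralizer_zpowers g
  rw [hg, show Nat.totient 84 = 24 by decide] at htot
  rw [hg] at hc
  set r := Nat.card (zpowers g).normalizerMonoidHom.range
  refine dvd_trans ?_ hN
  rcases (Nat.dvd_prime Nat.prime_two).1 (hcut.index_range_normalizerMonoidHom_dvd_two g)
    with hi | hi <;> rw [hi] at htot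
  · rw [show r = 24 by omega]
    omega
  · rw [show r = 12 by omega]
    omega

lemma IsCutGroup.exists_isMulCommutative_of_orderOf_eq_105 (hcut : IsCutGroup G) {g : G}
    (hg : orderOf g = 105) (hG : ¬ 2 ^ 4 ∣ Nat.card G) :
    ∃ M : Subgroup G, Nat.card M = 2 ^ 3 ∧ IsMulCommutative M := by
  have htot := card_range_normalizerMonoidHom_mul_index g
  rw [hg, show Nat.totient 105 = 48 by decide] at htot
  set N := normalizer (zpowers g : Set G)
  set C := centralizer (zpowers g : Set G)
  set r := Nat.card (zpowers g).normalizerMonoidHom.range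
  have hN : Nat.card N = Nat.card C * r := card_normalizer_eq_card_centralizer_mul _
  have hN16 : ¬ 2 ^ 4 ∣ Nat.card N := fun h => hG (h.trans (card_subgroup_dvd_card N))
  have hr : r = 24 := by
    rcases (Nat.dvd_prime Nat.prime_two).1 (hcut.index_range_normalizerMonoidHom_dvd_two g)
      with hi | hi <;> rw [hi] at htot
    · rw [show r = 48 by omega] at hN
      omega
    · omega
  rw [hr] at hN
  have hC : ¬ 2 ∣ Nat.card C := by omega
  obtain ⟨K, hK⟩ := Sylow.exists_subgroup_card_pow_prime 2 (G := N) (n := 3) (by omega)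
  set M := K.map N.subtype
  have hM : Nat.card M = 2 ^ 3 := (card_map_of_injective N.subtype_injective).trans hK
  have hMC : Disjoint M C := disjoint_of_coprime_natCard <| by
    rw [hM, Nat.coprime_pow_left_iff (by norm_num)]
    exact (Nat.Prime.coprime_iff_not_dvd Nat.prime_two).2 hC
  refine ⟨M, hM, commutator_self_eq_bot_iff.1 (eq_bot_iff.2 ?_)⟩
  refine (le_inf M.commutator_le_self ?_).trans (disjoint_iff_inf_le.1 hMC)
  exact (commutator_mono (map_subtype_le K) (map_subtype_le K)).trans
    (commutator_normalizer_zpowers_le_centralizer g)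

end

lemma Sylow.factorization_card_eq {G : Type*} [Group G] [Finite G] {p n : ℕ} [Fact p.Prime]
    (P : Sylow p G) (h : Nat.card P = p ^ n) : (Nat.card G).factorization p = n :=
  Nat.pow_right_injective (Fact.out : p.Prime).two_le (P.card_eq_multiplicity.symm.trans h)

lemma MulEquiv.isMulCommutative {A B : Type*} [Mul A] [Mul B] (e : A ≃* B)
    [hA : IsMulCommutative A] : IsMulCommutative B :=
  isMulCommutative_iff.2 fun a b => e.symm.injective (by rw [map_mul, map_mul, mul_comm'])

lemma QuaternionGroup.not_isMulCommutative_two : ¬ IsMulCommutative (QuaternionGroup 2) :=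
  fun _ => absurd (mul_comm' (a 1 : QuaternionGroup 2) (xa 0)) (by decide)

theorem stmt_15 {G : Type} [Group G] [Finite G] (hcut : IsCutGroup G)
    (hQ8 : ∀ P : Sylow 2 G, Nonempty (P ≃* QuaternionGroup 2)) :
    ∀ g : G, orderOf g ≠ 105 ∧ orderOf g ≠ 84 := by
  obtain ⟨P⟩ : Nonempty (Sylow 2 G) := inferInstance
  have hfac : (Nat.card G).factorization 2 = 3 := by
    refine P.factorization_card_eq ?_
    rw [Nat.card_congr (hQ8 P).some.toEquiv, Nat.card_eq_fintype_card, QuaternionGroup.card]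
    rfl
  have hG : ¬ 2 ^ 4 ∣ Nat.card G := by
    rw [Nat.prime_two.pow_dvd_iff_le_factorization Nat.card_pos.ne', hfac]
    norm_num
  intro g
  refine ⟨fun hg => ?_, fun hg => hG (hcut.two_pow_four_dvd_card_of_orderOf_eq_84 hg)⟩
  obtain ⟨M, hM, hcomm⟩ := hcut.exists_isMulCommutative_of_orderOf_eq_105 hg hG
  obtain ⟨e⟩ := hQ8 (Sylow.ofCard M (by rw [hM, hfac]))
  exact QuaternionGroup.not_isMulCommutative_two (e.isMulCommutative (hA := hcomm))
end
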